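/- Let $p \ge 2$, let $g = \sum_{j=1}^n g_j$ be measurable functions, and let $\mu = \sum_{i=1}^m \mu_i$ and $\omega = \sum_{i=1}^m \omega_i$ be sums of measures. If for every $i$ one has $\|g\|_{L^p(\mu_i)} \le D (\sum_j \|g_j\|_{L^p(\omega_i)}^2)^{1/2}$, then $\|g\|_{L^p(\mu)} \le D (\sum_j \|g_j\|_{L^p(\omega)}^2)^{1/2}$. -/

import Mathlib

open MeasureTheory ENNReal

open Finset in
theorem aux_Lp_sum_le {ι κ : Type*} (s : Finset ι) (t : Finset κ)
    (F : κ → ι → ℝ≥0∞) {p : ℝ} (hp : 1 ≤ p) :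
    (∑ i ∈ s, (∑ j ∈ t, F j i) ^ p) ^ (1 / p) ≤
      ∑ j ∈ t, (∑ i ∈ s, F j i ^ p) ^ (1 / p) := by
  have hp0 : (0:ℝ) < p := lt_of_lt_of_le zero_lt_one hp
  classical
  induction t using Finset.induction_on with
  | empty =>
    simp only [Finset.sum_empty, ENNReal.zero_rpow_of_pos hp0, Finset.sum_const_zero,
      ENNReal.zero_rpow_of_pos (by positivity : (0:ℝ) < 1/p), le_refl]
  | @insert a t ha ih =>
    simp_rw [Finset.sum_insert ha]
    calc (∑ i ∈ s, (F a i + ∑ j ∈ t, F j i) ^ p) ^ (1 / p)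
        ≤ (∑ i ∈ s, (F a i) ^ p) ^ (1 / p) +
            (∑ i ∈ s, (∑ j ∈ t, F j i) ^ p) ^ (1 / p) := ENNReal.Lp_add_le s _ _ hp
      _ ≤ (∑ i ∈ s, (F a i) ^ p) ^ (1 / p) +
            ∑ j ∈ t, (∑ i ∈ s, F j i ^ p) ^ (1 / p) := add_le_add le_rfl ih

/-- Parallel decoupling lemma: if the decoupling inequality holds for each pair of
measures `μ i`, `ω i` with uniform constant `D`, it holds for the sums of the measures. -/
theorem parallel_decoupling {X : Type*} [MeasurableSpace X] {m n : ℕ}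
    (p : ℝ≥0∞) (hp : 2 ≤ p)
    (μ ω : Fin m → Measure X) (gj : Fin n → X → ℂ) (g : X → ℂ)
    (hg : g = fun x => ∑ j, gj j x) (D : ℝ≥0∞)
    (h : ∀ i, eLpNorm g p (μ i) ≤
        D * (∑ j, (eLpNorm (gj j) p (ω i)) ^ 2) ^ (1/2 : ℝ)) :
    eLpNorm g p (∑ i, μ i) ≤
      D * (∑ j, (eLpNorm (gj j) p (∑ i, ω i)) ^ 2) ^ (1/2 : ℝ) := by
  clear hg
  by_cases hptop : p = ∞
  · subst hptop
    set M := D * (∑ j, (eLpNorm (gj j) ∞ (∑ i, ω i)) ^ 2) ^ (1/2 : ℝ) with hM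
    have hωle : ∀ i, ω i ≤ ∑ i', ω i' := fun i =>
      (Measure.sum_fintype ω ▸ Measure.le_sum ω i)
    have hi' : ∀ i, eLpNorm g ∞ (μ i) ≤ M := by
      intro i
      refine (h i).trans (mul_le_mul_right (ENNReal.rpow_le_rpow ?_ (by norm_num)) D)
      exact Finset.sum_le_sum fun j _ => pow_le_pow_left'
        (eLpNorm_mono_measure _ (hωle i)) 2
    rw [show (∑ i, μ i) = Measure.sum μ from (Measure.sum_fintype μ).symm]
    simp only [eLpNorm_exponent_top] at hi' ⊢
    refine essSup_le_of_ae_le M ?_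
    rw [Filter.EventuallyLE, Measure.ae_sum_iff]
    intro i
    exact (ae_le_eLpNormEssSup (f := g) (μ := μ i)).mono fun x hx => hx.trans (hi' i)
  · have h2 : (0:ℝ≥0∞) < 2 := by norm_num
    have hp0 : p ≠ 0 := (h2.trans_le hp).ne'
    set r := p.toReal with hrdef
    have hr2 : (2:ℝ) ≤ r := by
      have := ENNReal.toReal_mono hptop hp
      simpa using this
    have hr0 : (0:ℝ) < r := lt_of_lt_of_le two_pos hr2
    set q : ℝ := r / 2 with hqdef
    have hq1 : 1 ≤ q := by rw [hqdef]; linarith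
    have hq0 : (0:ℝ) < q := lt_of_lt_of_le zero_lt_one hq1
    have key : ∀ (f : X → ℂ) (ν : Fin m → Measure X),
        eLpNorm f p (∑ i, ν i) = (∑ i, (eLpNorm f p (ν i)) ^ r) ^ (1/r) := by
      intro f ν
      rw [eLpNorm_eq_lintegral_rpow_enorm_toReal hp0 hptop, lintegral_finset_sum_measure]
      congr 1
      refine Finset.sum_congr rfl fun i _ => ?_
      rw [eLpNorm_eq_lintegral_rpow_enorm_toReal hp0 hptop, ← ENNReal.rpow_mul,
        one_div, inv_mul_cancel₀ hr0.ne', ENNReal.rpow_one]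
    set A : Fin m → ℝ≥0∞ := fun i => eLpNorm g p (μ i) with hA
    set B : Fin m → Fin n → ℝ≥0∞ := fun i j => eLpNorm (gj j) p (ω i) with hB
    set C : Fin n → ℝ≥0∞ := fun j => eLpNorm (gj j) p (∑ i, ω i) with hC
    have hCr : ∀ j, C j ^ r = ∑ i, B i j ^ r := by
      intro j
      have hj : C j = (∑ i, B i j ^ r) ^ (1/r) := key (gj j) ω
      rw [hj, ← ENNReal.rpow_mul, one_div, inv_mul_cancel₀ hr0.ne', ENNReal.rpow_one]
    -- replace natural-number squares with real powers
    simp only [← ENNReal.rpow_natCast _ 2, Nat.cast_ofNat] at h ⊢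
    -- Minkowski step
    have mink : (∑ i, (∑ j, B i j ^ (2:ℝ)) ^ q) ^ (1/q) ≤ ∑ j, C j ^ (2:ℝ) := by
      refine le_trans (aux_Lp_sum_le Finset.univ Finset.univ
        (fun j i => B i j ^ (2:ℝ)) hq1) ?_
      refine le_of_eq (Finset.sum_congr rfl fun j _ => ?_)
      have e1 : ∀ i : Fin m, (B i j ^ (2:ℝ)) ^ q = B i j ^ r := by
        intro i
        rw [← ENNReal.rpow_mul]
        congr 1
        rw [hqdef]; ring
      simp_rw [e1, ← hCr j, ← ENNReal.rpow_mul]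
      congr 1
      rw [hqdef]; field_simp
    have mink' : (∑ i, (∑ j, B i j ^ (2:ℝ)) ^ q) ≤ (∑ j, C j ^ (2:ℝ)) ^ q := by
      have := ENNReal.rpow_le_rpow mink hq0.le
      rwa [← ENNReal.rpow_mul, one_div, inv_mul_cancel₀ hq0.ne', ENNReal.rpow_one] at this
    calc eLpNorm g p (∑ i, μ i) = (∑ i, A i ^ r) ^ (1/r) := key g μ
      _ ≤ (∑ i, (D * (∑ j, B i j ^ (2:ℝ)) ^ (1/2 : ℝ)) ^ r) ^ (1/r) := by
          refine ENNReal.rpow_le_rpow (Finset.sum_le_sum fun i _ => ?_) (by positivity)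
          exact ENNReal.rpow_le_rpow (h i) hr0.le
      _ = (D ^ r * ∑ i, (∑ j, B i j ^ (2:ℝ)) ^ q) ^ (1/r) := by
          congr 1
          rw [Finset.mul_sum]
          refine Finset.sum_congr rfl fun i _ => ?_
          rw [ENNReal.mul_rpow_of_nonneg _ _ hr0.le, ← ENNReal.rpow_mul]
          congr 2
          rw [hqdef]; ring
      _ ≤ (D ^ r * (∑ j, C j ^ (2:ℝ)) ^ q) ^ (1/r) := by
          exact ENNReal.rpow_le_rpow (mul_le_mul_right mink' _) (by positivity)
      _ = D * (∑ j, C j ^ (2:ℝ)) ^ (1/2 : ℝ) := by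
          rw [ENNReal.mul_rpow_of_nonneg _ _ (by positivity), ← ENNReal.rpow_mul,
            ← ENNReal.rpow_mul, mul_one_div, div_self hr0.ne', ENNReal.rpow_one]
          congr 1
          rw [hqdef]; field_simp
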